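/- Let N ≥ 1, let A, B be N×N complex matrices, and let g ∈ {0,1,2} be such that at least g of the two matrices A, B have rank at most 1. Then Σ_{1≤i,j≤N} |A_{i,j}·B_{i,j}| ≤ N^{1−g/2} · ‖A‖·‖B‖, where ‖·‖ denotes the matrix operator norm (largest singular value). -/

import Mathlib

/-!
By Cauchy–Schwarz, `∑ |A_{ij} B_{ij}|` is at most the product of the Frobenius norms of `A` and
`B`. Each column of `M` is the image of a unit vector, so `‖M‖_F ≤ √N ‖M‖`. A matrix of rank at
most one is an outer product `u vᵀ`, and then `‖M‖_F = |u| |v| = ‖M‖`. Every matrix of rank at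
most one thus saves a factor `√N`.
-/

open MeasureTheory ProbabilityTheory Matrix Asymptotics
open scoped ENNReal NNReal Kronecker ProbabilityTheory

noncomputable section

/-- Square complex matrices of size `N`. -/
abbrev Mat (N : ℕ) := Matrix (Fin N) (Fin N) ℂ

/-- The normalized trace `(1/N) Tr`. -/
def ntr {N : ℕ} (M : Mat N) : ℂ := (N : ℂ)⁻¹ * Matrix.trace M

/-- The operator norm of a matrix, acting on the Euclidean space `ℂ^N`. -/
def opNorm {N : ℕ} (M : Mat N) : ℝ := ‖Matrix.toEuclideanCLM (𝕜 := ℂ) M‖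

-- From here on `‖M‖` of a matrix is its Frobenius norm; the operator norm is `opNorm M`.
attribute [local instance] Matrix.frobeniusSeminormedAddCommGroup

namespace Matrix

variable {m n K : Type*}

theorem exists_eq_vecMulVec_of_rank_le_one [Field K] [Fintype n] [DecidableEq n]
    {M : Matrix m n K} (h : M.rank ≤ 1) : ∃ u v, M = vecMulVec u v := by
  obtain ⟨w, hw⟩ := finrank_le_one_iff.mp h
  choose c hc using fun j ↦ hw ⟨M.col j, M.mulVec_single_one j ▸ LinearMap.mem_range_self _ _⟩
  refine ⟨w, c, ext fun i j ↦ ?_⟩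
  simpa [vecMulVec_apply, mul_comm] using (congr_fun (congrArg Subtype.val (hc j)) i).symm

variable [Fintype m] [Fintype n]

theorem frobenius_norm_sq [SeminormedAddCommGroup K] (M : Matrix m n K) :
    ‖M‖ ^ 2 = ∑ i, ∑ j, ‖M i j‖ ^ 2 := by
  change ‖WithLp.toLp 2 fun i ↦ WithLp.toLp 2 fun j ↦ M i j‖ ^ 2 = _
  simp only [PiLp.norm_sq_eq_of_L2]

theorem sum_sum_norm_mul_le_frobenius_norm_mul [NonUnitalSeminormedRing K]
    (A B : Matrix m n K) : ∑ i, ∑ j, ‖A i j * B i j‖ ≤ ‖A‖ * ‖B‖ :=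
  calc ∑ i, ∑ j, ‖A i j * B i j‖ ≤ ∑ p : m × n, ‖A p.1 p.2‖ * ‖B p.1 p.2‖ := by
        rw [Fintype.sum_prod_type]
        gcongr
        exact norm_mul_le _ _
    _ ≤ √(∑ p : m × n, ‖A p.1 p.2‖ ^ 2) * √(∑ p : m × n, ‖B p.1 p.2‖ ^ 2) :=
        Real.sum_mul_le_sqrt_mul_sqrt _ _ _
    _ = ‖A‖ * ‖B‖ := by
        simp only [Fintype.sum_prod_type, ← frobenius_norm_sq, Real.sqrt_sq (norm_nonneg _)]

theorem frobenius_norm_vecMulVec [NormedField K] (u : m → K) (v : n → K) :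
    ‖vecMulVec u v‖ = ‖WithLp.toLp 2 u‖ * ‖WithLp.toLp 2 v‖ := by
  refine (sq_eq_sq₀ (norm_nonneg _) (by positivity)).mp ?_
  simp only [frobenius_norm_sq, mul_pow, PiLp.norm_sq_eq_of_L2, vecMulVec_apply, norm_mul,
    Finset.sum_mul_sum]

end Matrix

variable {N : ℕ}

theorem opNorm_nonneg (M : Mat N) : 0 ≤ opNorm M := norm_nonneg _

theorem opNorm_vecMulVec (u v : Fin N → ℂ) :
    opNorm (vecMulVec u v) = ‖WithLp.toLp 2 u‖ * ‖WithLp.toLp 2 v‖ := by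
  have h : toEuclideanCLM (𝕜 := ℂ) (vecMulVec u v) =
      InnerProductSpace.rankOne ℂ (WithLp.toLp 2 u) (WithLp.toLp 2 (star v)) := by
    apply ContinuousLinearMap.coe_injective
    rw [coe_toEuclideanCLM_eq_toEuclideanLin, ← LinearEquiv.eq_symm_apply,
      InnerProductSpace.symm_toEuclideanLin_rankOne]
    simp
  rw [opNorm, h, InnerProductSpace.norm_rankOne]
  simp [EuclideanSpace.norm_eq]

theorem norm_toLp_mulVec_le_opNorm (M : Mat N) (y : Fin N → ℂ) :
    ‖WithLp.toLp 2 (M *ᵥ y)‖ ≤ opNorm M * ‖WithLp.toLp 2 y‖ := by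
  rw [← toEuclideanCLM_toLp]
  exact (toEuclideanCLM (𝕜 := ℂ) M).le_opNorm _

theorem frobenius_norm_le_sqrt_mul_opNorm (M : Mat N) : ‖M‖ ≤ √N * opNorm M := by
  have hcol : ∀ j, ∑ i, ‖M i j‖ ^ 2 ≤ opNorm M ^ 2 := fun j ↦ by
    have := pow_le_pow_left₀ (norm_nonneg _) (norm_toLp_mulVec_le_opNorm M (Pi.single j 1)) 2
    simpa [PiLp.norm_sq_eq_of_L2, mulVec_single_one, PiLp.norm_single] using this
  refine (sq_le_sq₀ (norm_nonneg _) (mul_nonneg (Real.sqrt_nonneg _) (opNorm_nonneg M))).mp ?_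
  calc ‖M‖ ^ 2 = ∑ j, ∑ i, ‖M i j‖ ^ 2 := by rw [frobenius_norm_sq, Finset.sum_comm]
    _ ≤ ∑ _j : Fin N, opNorm M ^ 2 := Finset.sum_le_sum fun j _ ↦ hcol j
    _ = (√N * opNorm M) ^ 2 := by simp [mul_pow]

theorem frobenius_norm_eq_opNorm_of_rank_le_one {M : Mat N} (h : M.rank ≤ 1) :
    ‖M‖ = opNorm M := by
  obtain ⟨u, v, rfl⟩ := exists_eq_vecMulVec_of_rank_le_one h
  rw [frobenius_norm_vecMulVec, opNorm_vecMulVec]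

theorem frobenius_norm_le_rpow_mul_opNorm (M : Mat N) :
    ‖M‖ ≤ (N : ℝ) ^ ((1 - if M.rank ≤ 1 then 1 else 0 : ℝ) / 2) * opNorm M := by
  split_ifs with h
  · simp [frobenius_norm_eq_opNorm_of_rank_le_one h]
  · rw [sub_zero, ← Real.sqrt_eq_rpow]
    exact frobenius_norm_le_sqrt_mul_opNorm M

theorem entry_sum_two_bound_general
    (N : ℕ) (hN : 1 ≤ N) (A B : Mat N) (g : ℕ)
    (hr : g ≤ (Finset.univ.filter fun i : Fin 2 => (![A, B] i).rank ≤ 1).card) :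
    ∑ i : Fin N, ∑ j : Fin N, ‖A i j * B i j‖ ≤
      (N : ℝ) ^ ((1 : ℝ) - (g : ℝ) / 2) * (opNorm A * opNorm B) := by
  set e : Mat N → ℝ := fun M ↦ if M.rank ≤ 1 then 1 else 0
  have hcard : ((Finset.univ.filter fun i : Fin 2 => (![A, B] i).rank ≤ 1).card : ℝ) =
      e A + e B := by
    rw [Finset.card_filter, Fin.sum_univ_two]
    change (((if A.rank ≤ 1 then 1 else 0) + (if B.rank ≤ 1 then 1 else 0) : ℕ) : ℝ) = _
    push_cast
    rfl
  have hlow : (g : ℝ) ≤ e A + e B := hcard ▸ (by exact_mod_cast hr)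
  calc ∑ i, ∑ j, ‖A i j * B i j‖ ≤ ‖A‖ * ‖B‖ := sum_sum_norm_mul_le_frobenius_norm_mul A B
    _ ≤ ((N : ℝ) ^ ((1 - e A) / 2) * opNorm A) * ((N : ℝ) ^ ((1 - e B) / 2) * opNorm B) :=
        mul_le_mul (frobenius_norm_le_rpow_mul_opNorm A) (frobenius_norm_le_rpow_mul_opNorm B)
          (norm_nonneg _) (mul_nonneg (by positivity) (opNorm_nonneg A))
    _ = (N : ℝ) ^ (1 - (e A + e B) / 2) * (opNorm A * opNorm B) := by
        rw [mul_mul_mul_comm, ← Real.rpow_add (by positivity)]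
        ring_nf
    _ ≤ (N : ℝ) ^ ((1 : ℝ) - (g : ℝ) / 2) * (opNorm A * opNorm B) := by
        gcongr
        · exact mul_nonneg (opNorm_nonneg A) (opNorm_nonneg B)
        · exact_mod_cast hN

/-- If at least `g` of the matrices `A, B` have rank at most one, then
`∑_{i,j} |A_{ij} B_{ij}| ≤ N^{1-g/2} ‖A‖ ‖B‖`. -/
theorem entry_sum_two_bound
    (N : ℕ) (hN : 1 ≤ N) (A B : Mat N) (g : ℕ) (hg : g ≤ 2)
    (hr : g ≤ (Finset.univ.filter fun i : Fin 2 => (![A, B] i).rank ≤ 1).card) :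
    ∑ i : Fin N, ∑ j : Fin N, ‖A i j * B i j‖ ≤
      (N : ℝ) ^ ((1 : ℝ) - (g : ℝ) / 2) * (opNorm A * opNorm B) :=
  entry_sum_two_bound_general N hN A B g hr

end
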